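/- arXiv:2102.11381 — 2 statements merged into one kernel-verified Lean document; each statement's English description precedes it below -/
import Mathlib

section
/- Let β > 0 and let Γ : ℝ → P(ℝ) be a set-valued map of the form Γ(v) = gsgn(Γ₋(v), v, Γ₊(v)) where Γ₊ and Γ₋ are continuous nonincreasing real functions with Γ₊(0) ≤ Γ₋(0). Then for every f̄ ∈ ℝ the inclusion βv + f̄ ∈ Γ(v) has exactly one solution v ∈ ℝ. -/
/-!
Because `Γp 0 ≤ Γm 0` and both branches are antitone, `v ↦ gsgn (Γm v) v (Γp v)` is an antitone
set-valued map: every value at `w` lies below every value at `v < w`. Adding the strictly increasing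
`β v` makes two solutions impossible. For existence, the position of `fb` relative to
`[Γp 0, Γm 0]` decides the sign of the solution: inside the interval `v = 0` works, otherwise the
intermediate value theorem applied to `β v + fb - Γ± v` gives a root on the corresponding side of `0`.
-/

open Set

/-- Normal cone of the closed interval `[A,B]` at `x`. -/
noncomputable def normalCone (A B x : ℝ) : Set ℝ :=
  if x = B then Set.Ici 0
  else if x = A then Set.Iic 0
  else if A < x ∧ x < B then {0} else (∅ : Set ℝ)

/-- Normal cone of `[0,∞)` at `x`. -/
noncomputable def normalConeIci (x : ℝ) : Set ℝ :=
  if x = 0 then Set.Iic 0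
  else if 0 < x then {0} else (∅ : Set ℝ)

/-- Normal cone of `(-∞,M]` at `P`. -/
noncomputable def normalConeIic (M P : ℝ) : Set ℝ :=
  if P = M then Set.Ici 0
  else if P < M then {0} else (∅ : Set ℝ)

/-- Generalized set-valued sign function. -/
noncomputable def gsgn (a y b : ℝ) : Set ℝ :=
  if 0 < y then {b}
  else if y < 0 then {a}
  else Set.Icc (min a b) (max a b)

/-- Projection onto `[A,B]`. -/
noncomputable def proj (A B x : ℝ) : ℝ := max A (min B x)

/-- Signed square. -/
noncomputable def Ssq (x : ℝ) : ℝ := Real.sign x * x ^ 2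

/-- Signed square root. -/
noncomputable def Rsq (x : ℝ) : ℝ := Real.sign x * Real.sqrt |x|

/-- The function `Φ_A` of the paper. -/
noncomputable def PhiA (b c a : ℝ) : ℝ :=
  -Real.sign c * ((Real.sqrt (a ^ 2 * b ^ 2 + 4 * a * |c|) - a * b) / 2)

lemma gsgn_of_pos {a y b : ℝ} (hy : 0 < y) : gsgn a y b = {b} := by
  simp [gsgn, hy]

lemma gsgn_of_neg {a y b : ℝ} (hy : y < 0) : gsgn a y b = {a} := by
  simp [gsgn, hy, hy.not_gt]

lemma gsgn_zero_of_le {a b : ℝ} (hba : b ≤ a) : gsgn a 0 b = Icc b a := by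
  simp [gsgn, hba]

section

variable {Γp Γm : ℝ → ℝ} (hΓp : Antitone Γp) (hΓm : Antitone Γm) (h0 : Γp 0 ≤ Γm 0)
include hΓp hΓm h0

lemma le_of_mem_gsgn_of_lt {v w y z : ℝ} (hvw : v < w)
    (hy : y ∈ gsgn (Γm v) v (Γp v)) (hz : z ∈ gsgn (Γm w) w (Γp w)) : z ≤ y := by
  have hp := hΓp hvw.le
  have hm := hΓm hvw.le
  have hp0 : 0 ≤ w → Γp w ≤ Γp 0 := fun hw => hΓp hw
  have hm0 : v ≤ 0 → Γm 0 ≤ Γm v := fun hv => hΓm hv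
  rcases lt_trichotomy v 0 with hv | rfl | hv <;> rcases lt_trichotomy w 0 with hw | rfl | hw <;>
    simp only [gsgn_of_pos, gsgn_of_neg, gsgn_zero_of_le h0, mem_singleton_iff, mem_Icc, *]
      at hy hz <;> grind

lemma eq_of_mul_add_mem_gsgn {β f v w : ℝ} (hβ : 0 < β)
    (hv : β * v + f ∈ gsgn (Γm v) v (Γp v)) (hw : β * w + f ∈ gsgn (Γm w) w (Γp w)) :
    v = w := by
  by_contra hne
  rcases lt_or_gt_of_ne hne with h | h
  · nlinarith [le_of_mem_gsgn_of_lt hΓp hΓm h0 h hv hw]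
  · nlinarith [le_of_mem_gsgn_of_lt hΓp hΓm h0 h hw hv]

end

lemma exists_pos_mul_add_eq {β : ℝ} (hβ : 0 < β) {Γ : ℝ → ℝ} (hc : Continuous Γ)
    (ha : Antitone Γ) {f : ℝ} (hf : f < Γ 0) : ∃ v, 0 < v ∧ β * v + f = Γ v := by
  set M := (Γ 0 - f) / β
  have hM : 0 < M := div_pos (by linarith) hβ
  have hβM : β * M = Γ 0 - f := mul_div_cancel₀ _ hβ.ne'
  have hΓM := ha hM.le
  obtain ⟨v, hv, hveq⟩ := intermediate_value_Ioc hM.le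
    (f := fun v => β * v + f - Γ v) (by fun_prop) (show (0 : ℝ) ∈ Ioc _ _ from ⟨by linarith, by linarith⟩)
  exact ⟨v, hv.1, sub_eq_zero.mp hveq⟩

lemma exists_neg_mul_add_eq {β : ℝ} (hβ : 0 < β) {Γ : ℝ → ℝ} (hc : Continuous Γ)
    (ha : Antitone Γ) {f : ℝ} (hf : Γ 0 < f) : ∃ v, v < 0 ∧ β * v + f = Γ v := by
  set m := (Γ 0 - f) / β
  have hm : m < 0 := div_neg_of_neg_of_pos (by linarith) hβ
  have hβm : β * m = Γ 0 - f := mul_div_cancel₀ _ hβ.ne'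
  have hΓm := ha hm.le
  obtain ⟨v, hv, hveq⟩ := intermediate_value_Ico hm.le
    (f := fun v => β * v + f - Γ v) (by fun_prop) (show (0 : ℝ) ∈ Ico _ _ from ⟨by linarith, by linarith⟩)
  exact ⟨v, hv.2, sub_eq_zero.mp hveq⟩

theorem stmt_11 (β : ℝ) (hβ : 0 < β) (Γp Γm : ℝ → ℝ)
    (hΓpc : Continuous Γp) (hΓmc : Continuous Γm)
    (hΓp : Antitone Γp) (hΓm : Antitone Γm) (h0 : Γp 0 ≤ Γm 0) (fb : ℝ) :
    ∃! v : ℝ, β * v + fb ∈ gsgn (Γm v) v (Γp v) := by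
  refine existsUnique_of_exists_of_unique ?_ fun v w hv hw =>
    eq_of_mul_add_mem_gsgn hΓp hΓm h0 hβ hv hw
  rcases lt_or_ge fb (Γp 0) with hp | hp
  · obtain ⟨v, hv, hveq⟩ := exists_pos_mul_add_eq hβ hΓpc hΓp hp
    exact ⟨v, by rw [gsgn_of_pos hv, hveq]; rfl⟩
  rcases lt_or_ge (Γm 0) fb with hm | hm
  · obtain ⟨v, hv, hveq⟩ := exists_neg_mul_add_eq hβ hΓmc hΓm hm
    exact ⟨v, by rw [gsgn_of_neg hv, hveq]; rfl⟩
  exact ⟨0, by rw [gsgn_zero_of_le h0]; simpa using ⟨hp, hm⟩⟩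
end

section
/- Let û_ph > 0, F_hM > 0, A_h > 0, and P_c ∈ ℝ, and let v ∈ ℝ. Then the inclusion −v + û_ph·R(A_h·P_c − F_h) ∈ N_{[0,F_hM]}(F_h) holds if and only if F_h = proj_{[0,F_hM]}(A_h·P_c − S(v)/û_ph²), where R(x) = sgn(x)√|x| and S(x) = sgn(x)x². -/
open Set

lemma Ssq_eq (x : ℝ) : Ssq x = x * |x| := by
  unfold Ssq
  rcases lt_trichotomy x 0 with h|h|h <;>
    simp [Real.sign_of_neg, Real.sign_of_pos, abs_of_neg, abs_of_pos, h] <;> ring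

lemma Ssq_strictMono : StrictMono Ssq := by
  intro a b h
  simp only [Ssq_eq]
  have hba : 0 < (b - a) * (b - a) := mul_pos (sub_pos.2 h) (sub_pos.2 h)
  rcases le_total a 0 with ha|ha <;> rcases le_total b 0 with hb|hb
  · rw [abs_of_nonpos ha, abs_of_nonpos hb]; nlinarith
  · rw [abs_of_nonpos ha, abs_of_nonneg hb]; nlinarith [sq_nonneg (a + b)]
  · exact absurd (lt_of_lt_of_le h (hb.trans ha)) (lt_irrefl a)
  · rw [abs_of_nonneg ha, abs_of_nonneg hb]; nlinarith

lemma Ssq_Rsq (x : ℝ) : Ssq (Rsq x) = x := by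
  unfold Ssq Rsq
  rcases lt_trichotomy x 0 with h|h|h
  · have hs : Real.sign x = -1 := Real.sign_of_neg h
    have h1 : (0:ℝ) < Real.sqrt |x| := Real.sqrt_pos.2 (abs_pos.2 h.ne)
    have h2 : Real.sign (-1 * Real.sqrt |x|) = -1 := by
      rw [Real.sign_of_neg]; nlinarith
    rw [hs, h2, mul_pow, Real.sq_sqrt (abs_nonneg x), abs_of_neg h]; ring
  · simp [h]
  · have hs : Real.sign x = 1 := Real.sign_of_pos h
    have h1 : (0:ℝ) < Real.sqrt |x| := Real.sqrt_pos.2 (abs_pos.2 h.ne')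
    have h2 : Real.sign (1 * Real.sqrt |x|) = 1 := by
      rw [Real.sign_of_pos]; nlinarith
    rw [hs, h2, mul_pow, Real.sq_sqrt (abs_nonneg x), abs_of_pos h]; ring

lemma Ssq_div (v u : ℝ) (hu : 0 < u) : Ssq (v / u) = Ssq v / u ^ 2 := by
  have hs : Real.sign (v / u) = Real.sign v := by
    rcases lt_trichotomy v 0 with h|h|h
    · rw [Real.sign_of_neg h, Real.sign_of_neg (div_neg_of_neg_of_pos h hu)]
    · simp [h]
    · rw [Real.sign_of_pos h, Real.sign_of_pos (div_pos h hu)]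
  unfold Ssq
  rw [hs, div_pow]; ring

theorem stmt_16 (uph FhM Ah : ℝ) (huph : 0 < uph) (hFhM : 0 < FhM) (hAh : 0 < Ah)
    (Pc v Fh : ℝ) :
    -v + uph * Rsq (Ah * Pc - Fh) ∈ normalCone 0 FhM Fh ↔
      Fh = proj 0 FhM (Ah * Pc - Ssq v / uph ^ 2) := by
  set s : ℝ := Ssq v / uph ^ 2 with hs
  have hsv : Ssq (v / uph) = s := Ssq_div v uph huph
  set x0 : ℝ := Ah * Pc - s with hx0
  have key : ∀ F : ℝ, (0 ≤ -v + uph * Rsq (Ah * Pc - F)) ↔ F ≤ x0 := by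
    intro F
    constructor
    · intro h
      have h1 : v / uph ≤ Rsq (Ah * Pc - F) := by
        rw [div_le_iff₀ huph]; nlinarith
      have h2 : Ssq (v / uph) ≤ Ssq (Rsq (Ah * Pc - F)) := Ssq_strictMono.le_iff_le.mpr h1
      rw [Ssq_Rsq, hsv] at h2
      simp only [hx0]; linarith
    · intro h
      have h2 : Ssq (v / uph) ≤ Ssq (Rsq (Ah * Pc - F)) := by
        rw [Ssq_Rsq, hsv]; simp only [hx0] at h; linarith
      have h1 : v / uph ≤ Rsq (Ah * Pc - F) := Ssq_strictMono.le_iff_le.mp h2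
      rw [div_le_iff₀ huph] at h1
      nlinarith
  have key2 : ∀ F : ℝ, (-v + uph * Rsq (Ah * Pc - F) ≤ 0) ↔ x0 ≤ F := by
    intro F
    constructor
    · intro h
      have h1 : Rsq (Ah * Pc - F) ≤ v / uph := by
        rw [le_div_iff₀ huph]; nlinarith
      have h2 : Ssq (Rsq (Ah * Pc - F)) ≤ Ssq (v / uph) := Ssq_strictMono.le_iff_le.mpr h1
      rw [Ssq_Rsq, hsv] at h2
      simp only [hx0]; linarith
    · intro h
      have h2 : Ssq (Rsq (Ah * Pc - F)) ≤ Ssq (v / uph) := by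
        rw [Ssq_Rsq, hsv]; simp only [hx0] at h; linarith
      have h1 : Rsq (Ah * Pc - F) ≤ v / uph := Ssq_strictMono.le_iff_le.mp h2
      rw [le_div_iff₀ huph] at h1
      nlinarith
  have hproj : proj 0 FhM x0 = max 0 (min FhM x0) := rfl
  show _ ↔ Fh = proj 0 FhM x0
  rw [hproj]
  unfold normalCone
  by_cases hB : Fh = FhM
  · rw [if_pos hB]
    simp only [Set.mem_Ici]
    rw [key Fh, hB]
    constructor
    · intro h; rw [min_eq_left h, max_eq_right hFhM.le]
    · intro h
      rcases le_total FhM x0 with h'|h'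
      · exact h'
      · rw [min_eq_right h'] at h
        rcases le_total 0 x0 with h0|h0
        · rw [max_eq_right h0] at h; exact h.le
        · rw [max_eq_left h0] at h; linarith
  · rw [if_neg hB]
    by_cases hZ : Fh = 0
    · rw [if_pos hZ]
      simp only [Set.mem_Iic]
      rw [key2 Fh, hZ]
      constructor
      · intro h
        rw [max_eq_left ((min_le_right _ _).trans h)]
      · intro h
        by_contra h'
        push_neg at h'
        have hm : 0 < min FhM x0 := lt_min hFhM h'
        rw [max_eq_right hm.le] at h
        linarith
    · rw [if_neg hZ]
      by_cases hmid : 0 < Fh ∧ Fh < FhM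
      · rw [if_pos hmid]
        simp only [Set.mem_singleton_iff]
        have keyeq : (-v + uph * Rsq (Ah * Pc - Fh) = 0) ↔ Fh = x0 := by
          constructor
          · intro h
            exact le_antisymm ((key Fh).mp h.ge) ((key2 Fh).mp h.le)
          · intro h
            exact le_antisymm ((key2 Fh).mpr h.ge) ((key Fh).mpr h.le)
        rw [keyeq]
        constructor
        · intro h
          rw [min_eq_right (h ▸ hmid.2.le), max_eq_right (h ▸ hmid.1.le)]
          exact h
        · intro h
          rcases le_or_gt x0 0 with h0|h0
          · have : min FhM x0 ≤ 0 := (min_le_right _ _).trans h0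
            rw [max_eq_left this] at h
            exact absurd h hZ
          · rcases le_or_gt FhM x0 with h1|h1
            · rw [min_eq_left h1, max_eq_right hFhM.le] at h
              exact absurd h hB
            · rw [min_eq_right h1.le, max_eq_right h0.le] at h
              exact h
      · rw [if_neg hmid]
        simp only [Set.mem_empty_iff_false, false_iff]
        intro h
        have h1 : (0:ℝ) ≤ max 0 (min FhM x0) := le_max_left _ _
        have h2 : max 0 (min FhM x0) ≤ FhM := max_le hFhM.le (min_le_left _ _)
        rw [← h] at h1 h2
        exact hmid ⟨lt_of_le_of_ne h1 (Ne.symm hZ), lt_of_le_of_ne h2 hB⟩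
end
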